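/- arXiv:1411.6647 — 2 statements merged into one kernel-verified Lean document; each statement's English description precedes it below -/
import Mathlib

section
/- For every 2×2 integer matrix A with determinant 1, there exists a natural number d with 1 ≤ d ≤ 6 such that I + A + A² + ⋯ + A^{d-1} ≡ 0 modulo 3 (entrywise). -/
lemma aux0 (B : Matrix (Fin 2) (Fin 2) (ZMod 3)) (h2 : B ^ 2 = -1) :
    ∑ n ∈ Finset.range 4, B ^ n = 0 := by
  have h3 : B ^ 3 = -B := by rw [pow_succ, h2]; noncomm_ring
  simp [Finset.sum_range_succ, h2, h3]

lemma aux1 (B : Matrix (Fin 2) (Fin 2) (ZMod 3)) (h2 : B ^ 2 = B - 1) :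
    ∑ n ∈ Finset.range 6, B ^ n = 0 := by
  have h3 : B ^ 3 = -1 := by
    rw [pow_succ, h2, sub_mul, one_mul, ← pow_two, h2]; noncomm_ring
  have h4 : B ^ 4 = -B := by rw [pow_succ, h3]; noncomm_ring
  have h5 : B ^ 5 = 1 - B := by
    rw [pow_succ, h4, neg_mul, ← pow_two, h2]; noncomm_ring
  simp [Finset.sum_range_succ, h2, h3, h4, h5]
  abel

lemma aux2 (B : Matrix (Fin 2) (Fin 2) (ZMod 3)) (h2 : B ^ 2 = -B - 1) :
    ∑ n ∈ Finset.range 3, B ^ n = 0 := by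
  simp [Finset.sum_range_succ, h2]
  abel

/-- For every `A ∈ SL(2,ℤ)` there is `1 ≤ d ≤ 6` with
`I + A + ⋯ + A^{d-1} ≡ 0 (mod 3)` entrywise. -/
theorem sl2_geom_sum_mod_three (A : Matrix (Fin 2) (Fin 2) ℤ) (hA : A.det = 1) :
    ∃ d : ℕ, 1 ≤ d ∧ d ≤ 6 ∧
      ∀ i j : Fin 2, (3 : ℤ) ∣ (∑ n ∈ Finset.range d, A ^ n) i j := by
  set f := Int.castRingHom (ZMod 3)
  set B : Matrix (Fin 2) (Fin 2) (ZMod 3) := A.map f with hBdef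
  have hdet : B.det = 1 := by
    have := (RingHom.map_det f A).symm
    rw [RingHom.mapMatrix_apply] at this
    rw [hBdef, this, hA, map_one]
  have hd : B 0 0 * B 1 1 - B 0 1 * B 1 0 = 1 := by
    rw [← Matrix.det_fin_two]; exact hdet
  -- Cayley–Hamilton for 2×2
  have hB2 : ∀ t : ZMod 3, B 0 0 + B 1 1 = t → B ^ 2 = t • B - 1 := by
    intro t ht
    ext i j
    fin_cases i <;> fin_cases j <;>
      simp [pow_two, Matrix.mul_apply, Fin.sum_univ_succ, Matrix.smul_apply,
        Matrix.one_apply, smul_eq_mul, ← ht] <;>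
      first
        | linear_combination hd
        | linear_combination -hd
        | linear_combination 2*hd
        | linear_combination -2*hd
        | ring
  have key : ∃ d : ℕ, 1 ≤ d ∧ d ≤ 6 ∧ ∑ n ∈ Finset.range d, B ^ n = 0 := by
    have htri : ∀ x : ZMod 3, x = 0 ∨ x = 1 ∨ x = 2 := by decide
    rcases htri (B 0 0 + B 1 1) with h | h | h
    · refine ⟨4, by norm_num, by norm_num, aux0 B ?_⟩
      have := hB2 0 h; simpa using this
    · refine ⟨6, by norm_num, by norm_num, aux1 B ?_⟩
      have := hB2 1 h; simpa using this
    · refine ⟨3, by norm_num, by norm_num, aux2 B ?_⟩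
      have := hB2 2 h
      rw [this]
      congr 1
      have h2 : (2 : ZMod 3) = -1 := by decide
      rw [h2, neg_smul, one_smul]
  obtain ⟨d, hd1, hd6, hsum⟩ := key
  refine ⟨d, hd1, hd6, fun i j => ?_⟩
  rw [show (3:ℤ) = ((3:ℕ):ℤ) by norm_num, ← ZMod.intCast_zmod_eq_zero_iff_dvd]
  have hmap : ((∑ n ∈ Finset.range d, A ^ n).map f) = ∑ n ∈ Finset.range d, B ^ n := by
    rw [hBdef]
    simp only [← RingHom.mapMatrix_apply, map_sum, map_pow]
  have h2 := congrFun (congrFun (hmap.trans hsum) i) j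
  simpa [Matrix.map_apply] using h2
end

section
/- Let A ∈ SL(2,ℤ), let G = ℤ² ⋊_A ℤ be the semidirect product, and for k ≥ 1 set m = 3^k and U_m = {((mx, my), z) : x, y, z ∈ ℤ} ≤ G. Then for every g ∈ G there exists a natural number d with 1 ≤ d ≤ 6^k such that g^d ∈ U_m. -/
structure SDP (A : Matrix.SpecialLinearGroup (Fin 2) ℤ) where
  v : Fin 2 → ℤ
  z : ℤ

/-- The matrix `A^z` for `z ∈ ℤ`. -/
def SDP.mat (A : Matrix.SpecialLinearGroup (Fin 2) ℤ) (z : ℤ) :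
    Matrix (Fin 2) (Fin 2) ℤ :=
  ((A ^ z : Matrix.SpecialLinearGroup (Fin 2) ℤ) : Matrix (Fin 2) (Fin 2) ℤ)

instance (A : Matrix.SpecialLinearGroup (Fin 2) ℤ) : Group (SDP A) where
  mul p q := ⟨p.v + (SDP.mat A p.z).mulVec q.v, p.z + q.z⟩
  one := ⟨0, 0⟩
  inv p := ⟨-((SDP.mat A (-p.z)).mulVec p.v), -p.z⟩
  mul_assoc := by
    rintro ⟨av, az⟩ ⟨bv, bz⟩ ⟨cv, cz⟩
    show SDP.mk (av + (SDP.mat A az).mulVec bv + (SDP.mat A (az + bz)).mulVec cv)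
        (az + bz + cz) =
      SDP.mk (av + (SDP.mat A az).mulVec (bv + (SDP.mat A bz).mulVec cv))
        (az + (bz + cz))
    simp only [SDP.mk.injEq]
    refine ⟨?_, by ring⟩
    rw [SDP.mat, SDP.mat, SDP.mat, zpow_add, Matrix.SpecialLinearGroup.coe_mul,
      ← Matrix.mulVec_mulVec, Matrix.mulVec_add, add_assoc]
  one_mul := by
    rintro ⟨av, az⟩
    show SDP.mk ((0 : Fin 2 → ℤ) + (SDP.mat A 0).mulVec av) (0 + az) = SDP.mk av az
    simp [SDP.mat]
  mul_one := by
    rintro ⟨av, az⟩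
    show SDP.mk (av + (SDP.mat A az).mulVec (0 : Fin 2 → ℤ)) (az + 0) = SDP.mk av az
    simp
  inv_mul_cancel := by
    rintro ⟨av, az⟩
    show SDP.mk (-(SDP.mat A (-az)).mulVec av + (SDP.mat A (-az)).mulVec av)
        (-az + az) = SDP.mk 0 0
    simp

/-!
Write `g = (v, z)` and `B = A ^ z`. Then `g ^ d = ((1 + B + ⋯ + B ^ (d - 1)) v, d z)`, so it
suffices to find `d ≤ 6 ^ k` with `S_d := ∑_{i<d} B ^ i ≡ 0 (mod 3 ^ k)`.

Cayley–Hamilton gives `1 + C + C² = (tr C + 1) C` for `C ∈ SL(2, ℤ)`, and with `C = B ^ d` we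
have `S_{3d} = (1 + C + C²) S_d`. Hence if `tr (B ^ d) ≡ -1 (mod 3)`, passing from `d` to `3d`
gains a factor `3` in `S_d`, and the condition persists since `tr C³ = (tr C)³ - 3 tr C`.
A case split on `tr B mod 3` starts the induction at `k = 1` with `d = 3`, `4` or `6`.
-/

open Matrix Finset

namespace Matrix
variable {R : Type*} [CommRing R] {M : Matrix (Fin 2) (Fin 2) R}

theorem sq_eq_trace_smul_sub_one (h : M.det = 1) : M ^ 2 = M.trace • M - 1 := by
  nontriviality R
  have hCH := M.aeval_self_charpoly
  simp only [charpoly_fin_two, h, map_add, map_sub, map_pow, Polynomial.aeval_X,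
    Polynomial.aeval_C, map_one, map_mul, ← Algebra.smul_def] at hCH
  rw [← sub_eq_zero, ← hCH]
  abel

theorem trace_sq_of_det_eq_one (h : M.det = 1) : (M ^ 2).trace = M.trace ^ 2 - 2 := by
  rw [sq_eq_trace_smul_sub_one h]
  simp only [trace_sub, trace_smul, trace_one, Fintype.card_fin, smul_eq_mul]
  push_cast
  ring

theorem trace_pow_three_of_det_eq_one (h : M.det = 1) :
    (M ^ 3).trace = M.trace ^ 3 - 3 * M.trace := by
  rw [pow_succ, sq_eq_trace_smul_sub_one h, sub_mul, smul_mul_assoc, ← sq,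
    sq_eq_trace_smul_sub_one h, one_mul]
  simp only [trace_sub, trace_smul, trace_one, Fintype.card_fin, smul_eq_mul]
  ring

theorem one_add_add_sq_of_det_eq_one (h : M.det = 1) :
    1 + M + M ^ 2 = (M.trace + 1) • M := by
  rw [sq_eq_trace_smul_sub_one h, add_smul, one_smul]
  abel

end Matrix

theorem geom_sum_range_mul {α : Type*} [Semiring α] (x : α) (m n : ℕ) :
    ∑ i ∈ range (m * n), x ^ i = (∑ j ∈ range m, (x ^ n) ^ j) * ∑ i ∈ range n, x ^ i := by
  induction m with
  | zero => simp
  | succ m ih =>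
    rw [Nat.succ_mul, sum_range_add, ih, sum_range_succ, add_mul, ← pow_mul, mul_comm n m]
    congr 1
    simp only [pow_add, mul_sum]

namespace Matrix
variable {B : Matrix (Fin 2) (Fin 2) ℤ}

theorem three_dvd_trace_pow_three_mul_add_one (hB : B.det = 1) {d : ℕ}
    (h : 3 ∣ (B ^ d).trace + 1) : 3 ∣ (B ^ (3 * d)).trace + 1 := by
  obtain ⟨c, hc⟩ := h
  refine ⟨9 * c ^ 3 - 9 * c ^ 2 + 1, ?_⟩
  rw [mul_comm, pow_mul, trace_pow_three_of_det_eq_one (by simp [det_pow, hB]),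
    eq_sub_of_add_eq hc]
  ring

theorem exists_geom_sum_three_mul_eq_smul (hB : B.det = 1) {d k : ℕ}
    {M : Matrix (Fin 2) (Fin 2) ℤ} (hM : ∑ i ∈ range d, B ^ i = (3 : ℤ) ^ k • M)
    (htr : 3 ∣ (B ^ d).trace + 1) :
    ∃ M' : Matrix (Fin 2) (Fin 2) ℤ, ∑ i ∈ range (3 * d), B ^ i = (3 : ℤ) ^ (k + 1) • M' := by
  obtain ⟨c, hc⟩ := htr
  refine ⟨c • (B ^ d * M), ?_⟩
  have hsum : ∑ j ∈ range 3, (B ^ d) ^ j = 1 + B ^ d + (B ^ d) ^ 2 := by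
    simp [sum_range_succ]
  rw [geom_sum_range_mul, hsum, one_add_add_sq_of_det_eq_one (by simp [det_pow, hB]), hc, hM,
    smul_mul_smul_comm, smul_smul, pow_succ']
  ring_nf

theorem exists_geom_sum_eq_three_smul (hB : B.det = 1) :
    ∃ d, 1 ≤ d ∧ d ≤ 6 ∧ (∃ M : Matrix (Fin 2) (Fin 2) ℤ, ∑ i ∈ range d, B ^ i = (3 : ℤ) • M) ∧
      3 ∣ (B ^ d).trace + 1 := by
  have hstep : ∀ d₀, 3 ∣ (B ^ d₀).trace + 1 →
      (∃ M : Matrix (Fin 2) (Fin 2) ℤ, ∑ i ∈ range (3 * d₀), B ^ i = (3 : ℤ) • M) ∧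
      3 ∣ (B ^ (3 * d₀)).trace + 1 := fun d₀ h =>
    ⟨by simpa using exists_geom_sum_three_mul_eq_smul hB (k := 0) (one_smul ℤ _).symm h,
      three_dvd_trace_pow_three_mul_add_one hB h⟩
  rcases (by omega : 3 ∣ B.trace ∨ 3 ∣ B.trace - 1 ∨ 3 ∣ B.trace + 1) with h0 | h1 | h2
  · -- `∑_{i<4} B ^ i = (1 + B²)(1 + B)` with `1 + B² = tr B • B`, and
    -- `tr (B ^ 4) + 1 = (t² - 1)(t² - 3)` for `t = tr B`.
    obtain ⟨c, hc⟩ := h0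
    refine ⟨4, by norm_num, by norm_num, ⟨c • (B * (B + 1)), ?_⟩, ?_⟩
    · rw [show 4 = 2 * 2 by rfl, geom_sum_range_mul, geom_sum_two, geom_sum_two,
        sq_eq_trace_smul_sub_one hB, sub_add_cancel, hc, smul_smul, smul_mul_assoc]
    · refine ⟨(B.trace ^ 2 - 1) * (3 * c ^ 2 - 1), ?_⟩
      rw [show 4 = 2 * 2 by rfl, pow_mul, trace_sq_of_det_eq_one (by simp [det_pow, hB]),
        trace_sq_of_det_eq_one hB, hc]
      ring
  · have htr : (B ^ 2).trace + 1 = (B.trace - 1) * (B.trace + 1) := by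
      rw [trace_sq_of_det_eq_one hB]
      ring
    exact ⟨6, by norm_num, by norm_num, hstep 2 (htr ▸ h1.mul_right _)⟩
  · exact ⟨3, by norm_num, by norm_num, hstep 1 (by simpa using h2)⟩

theorem exists_geom_sum_eq_three_pow_smul_of_one_le (hB : B.det = 1) {k : ℕ} (hk : 1 ≤ k) :
    ∃ d, 1 ≤ d ∧ d ≤ 6 ^ k ∧
      (∃ M : Matrix (Fin 2) (Fin 2) ℤ, ∑ i ∈ range d, B ^ i = (3 : ℤ) ^ k • M) ∧
      3 ∣ (B ^ d).trace + 1 := by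
  induction k, hk using Nat.le_induction with
  | base => simpa using exists_geom_sum_eq_three_smul hB
  | succ k _ ih =>
    obtain ⟨d, hd1, hd, ⟨M, hM⟩, htr⟩ := ih
    refine ⟨3 * d, by omega, ?_, exists_geom_sum_three_mul_eq_smul hB hM htr,
      three_dvd_trace_pow_three_mul_add_one hB htr⟩
    rw [pow_succ]
    omega

theorem exists_geom_sum_eq_three_pow_smul (hB : B.det = 1) (k : ℕ) :
    ∃ d, 1 ≤ d ∧ d ≤ 6 ^ k ∧
      ∃ M : Matrix (Fin 2) (Fin 2) ℤ, ∑ i ∈ range d, B ^ i = (3 : ℤ) ^ k • M := by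
  rcases Nat.eq_zero_or_pos k with rfl | hk
  · exact ⟨1, le_rfl, le_rfl, 1, by simp⟩
  · obtain ⟨d, hd1, hd, hM, -⟩ := exists_geom_sum_eq_three_pow_smul_of_one_le hB hk
    exact ⟨d, hd1, hd, hM⟩

end Matrix

namespace SDP
variable {A : Matrix.SpecialLinearGroup (Fin 2) ℤ}

theorem mat_natCast_mul (n : ℕ) (z : ℤ) : SDP.mat A (n * z) = SDP.mat A z ^ n := by
  rw [SDP.mat, SDP.mat, mul_comm, _root_.zpow_mul, zpow_natCast,
    Matrix.SpecialLinearGroup.coe_pow]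

theorem mk_mul_mk (v w : Fin 2 → ℤ) (y z : ℤ) :
    (SDP.mk v y : SDP A) * SDP.mk w z = ⟨v + SDP.mat A y *ᵥ w, y + z⟩ :=
  rfl

theorem mk_pow (v : Fin 2 → ℤ) (z : ℤ) (n : ℕ) :
    (SDP.mk v z : SDP A) ^ n = ⟨(∑ i ∈ range n, SDP.mat A z ^ i) *ᵥ v, n * z⟩ := by
  induction n with
  | zero =>
    rw [pow_zero, sum_range_zero, zero_mulVec, Nat.cast_zero, zero_mul]
    rfl
  | succ n ih =>
    rw [pow_succ, ih, mk_mul_mk, mat_natCast_mul, sum_range_succ, add_mulVec]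
    congr 1
    push_cast
    ring

end SDP

theorem sdp_pow_mem_Um_general (A : Matrix.SpecialLinearGroup (Fin 2) ℤ)
    (k : ℕ) (g : SDP A) :
    ∃ d : ℕ, 1 ≤ d ∧ d ≤ 6 ^ k ∧
      ∃ x y z : ℤ, g ^ d = ⟨![((3 : ℤ) ^ k) * x, ((3 : ℤ) ^ k) * y], z⟩ := by
  obtain ⟨v, z⟩ := g
  obtain ⟨d, hd1, hd, M, hM⟩ :=
    Matrix.exists_geom_sum_eq_three_pow_smul (B := SDP.mat A z) (A ^ z).det_coe k
  refine ⟨d, hd1, hd, (M *ᵥ v) 0, (M *ᵥ v) 1, d * z, ?_⟩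
  rw [SDP.mk_pow, hM, smul_mulVec]
  congr
  ext i
  fin_cases i <;> rfl

/-- Lemma 3.14 (key step): for `k ≥ 1` and `m = 3^k`, every `g ∈ ℤ² ⋊_A ℤ` has a power
`g^d` with `1 ≤ d ≤ 6^k` lying in `U_m = {((mx, my), z) : x, y, z ∈ ℤ}`. -/
theorem sdp_pow_mem_Um (A : Matrix.SpecialLinearGroup (Fin 2) ℤ)
    (k : ℕ) (hk : 1 ≤ k) (g : SDP A) :
    ∃ d : ℕ, 1 ≤ d ∧ d ≤ 6 ^ k ∧
      ∃ x y z : ℤ, g ^ d = ⟨![((3 : ℤ) ^ k) * x, ((3 : ℤ) ^ k) * y], z⟩ :=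
  sdp_pow_mem_Um_general A k g
end
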